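/- arXiv:2210.16361 — 2 statements merged into one kernel-verified Lean document; each statement's English description precedes it below -/
import Mathlib

section
/- The function q_n^ε(ρ) = d/dρ [ρ Q_n^ε(ρ)] is monotonically decreasing on [0, ε²]. -/
lemma iter_rpow (α : ℝ) (k : ℕ) : ∀ x : ℝ, 0 < x →
    iteratedDeriv k (fun x : ℝ => x ^ α / (α + 1)) x
      = (∏ i ∈ Finset.range k, (α - i)) * x ^ (α - k) / (α + 1) := by
  induction k with
  | zero => intro x hx; simp
  | succ k ih =>
    intro x hx
    rw [iteratedDeriv_succ]
    have hev : iteratedDeriv k (fun x : ℝ => x ^ α / (α + 1)) =ᶠ[nhds x]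
        fun y => (∏ i ∈ Finset.range k, (α - i)) * y ^ (α - k) / (α + 1) := by
      filter_upwards [Ioi_mem_nhds hx] with y hy
      exact ih y hy
    rw [hev.deriv_eq]
    have hd : HasDerivAt
        (fun y : ℝ => (∏ i ∈ Finset.range k, (α - i)) * y ^ (α - k) / (α + 1))
        ((∏ i ∈ Finset.range k, (α - i)) * ((α - k) * x ^ (α - k - 1)) / (α + 1)) x :=
      ((Real.hasDerivAt_rpow_const (Or.inl hx.ne')).const_mul _).div_const _
    rw [hd.deriv, Finset.prod_range_succ]
    have he : α - (k:ℝ) - 1 = α - ((k+1 : ℕ) : ℝ) := by push_cast; ring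
    rw [he]
    ring

lemma key_identity (α a ρ : ℝ) (ha : a ≠ 0) (c : ℕ → ℝ)
    (hrec : ∀ k : ℕ, a * c (k+1) = (α - k) * c k) (m : ℕ) :
    ∑ k ∈ Finset.range (m+2),
        c k * (k:ℝ) * (2*(ρ-a)^(k-1) + ρ*((k:ℝ)-1)*(ρ-a)^(k-2)) / (Nat.factorial k : ℝ)
      = (1+α) * ∑ k ∈ Finset.Ico 1 (m+1), c k * (ρ-a)^(k-1) / (Nat.factorial (k-1) : ℝ)
        + ((m:ℝ)+2) * c (m+1) * (ρ-a)^m / (Nat.factorial m : ℝ) := by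
  induction m with
  | zero => norm_num [Finset.sum_range_succ]; ring
  | succ m ih =>
    rw [Finset.sum_range_succ, ih, Finset.sum_Ico_succ_top (by omega : 1 ≤ m+1)]
    have hf1 : ((Nat.factorial (m+1) : ℕ) : ℝ) = ((m:ℝ)+1) * (Nat.factorial m : ℝ) := by
      rw [Nat.factorial_succ]; push_cast; ring
    have hf2 : ((Nat.factorial (m+2) : ℕ) : ℝ)
        = ((m:ℝ)+2) * (((m:ℝ)+1) * (Nat.factorial m : ℝ)) := by
      rw [show m+2 = (m+1)+1 from rfl, Nat.factorial_succ]
      push_cast [hf1]; ring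
    have e1 : m+2-1 = m+1 := rfl
    have e2 : m+2-2 = m := rfl
    have e3 : m+1-1 = m := rfl
    have hc2 : c (m+2) = (α - ((m:ℝ)+1)) * c (m+1) / a := by
      have h := hrec (m+1)
      push_cast at h
      field_simp
      linear_combination h
    have hfm : (Nat.factorial m : ℝ) ≠ 0 := by
      exact_mod_cast (Nat.factorial_pos m).ne'
    have hm1 : ((m:ℝ)+1) ≠ 0 := by positivity
    have hm2 : ((m:ℝ)+2) ≠ 0 := by positivity
    rw [e1, e2, e3, hf1, hf2, hc2]
    push_cast
    field_simp
    ring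

/-- q_n^ε(ρ) = d/dρ [ρ Q_n^ε(ρ)] is monotonically decreasing on [0, ε²]. -/
theorem stmt_5 (α ε : ℝ) (hα : α ∈ Set.Ioo (-1 : ℝ) 0) (hε : 0 < ε)
    (n : ℕ) (hn : 1 ≤ n) :
    AntitoneOn
      (fun ρ : ℝ => deriv
        (fun y : ℝ => y * ∑ k ∈ Finset.range (n + 1),
          iteratedDeriv k (fun x : ℝ => x ^ α / (α + 1)) (ε ^ 2) * (y - ε ^ 2) ^ k
            / (Nat.factorial k : ℝ)) ρ)
      (Set.Icc (0 : ℝ) (ε ^ 2)) := by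
  obtain ⟨hαm, hα0⟩ := hα
  have hα1 : 0 < α + 1 := by linarith
  set a : ℝ := ε ^ 2 with ha_def
  have ha0 : 0 < a := by positivity
  set c : ℕ → ℝ := fun k => (∏ i ∈ Finset.range k, (α - i)) * a ^ (α - k) / (α + 1)
    with hc_def
  have hiter : ∀ k, iteratedDeriv k (fun x : ℝ => x ^ α / (α + 1)) a = c k :=
    fun k => iter_rpow α k a ha0
  -- recurrence
  have hrec : ∀ k : ℕ, a * c (k+1) = (α - k) * c k := by
    intro k
    have hpow : a * a ^ (α - ((k:ℝ)+1)) = a ^ (α - (k:ℝ)) := by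
      have h1 : α - (k:ℝ) = 1 + (α - ((k:ℝ)+1)) := by ring
      rw [h1, Real.rpow_add ha0, Real.rpow_one]
    simp only [hc_def, Finset.prod_range_succ]
    push_cast
    linear_combination ((∏ i ∈ Finset.range k, (α - i)) * (α - (k:ℝ)) / (α + 1)) * hpow
  -- sign
  have hsign : ∀ k, 0 ≤ (-1:ℝ)^k * c k := by
    intro k
    have h1 : (-1:ℝ)^k * ∏ i ∈ Finset.range k, (α - i)
        = ∏ i ∈ Finset.range k, ((i:ℝ) - α) := by
      rw [show ((-1:ℝ)^k) = ∏ _i ∈ Finset.range k, (-1:ℝ) by simp,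
        ← Finset.prod_mul_distrib]
      exact Finset.prod_congr rfl fun i _ => by ring
    have h2 : 0 ≤ ∏ i ∈ Finset.range k, ((i:ℝ) - α) :=
      Finset.prod_nonneg fun i _ => by
        have : (0:ℝ) ≤ i := Nat.cast_nonneg i
        linarith
    have h3 : (-1:ℝ)^k * c k
        = (∏ i ∈ Finset.range k, ((i:ℝ) - α)) * a ^ (α - (k:ℝ)) / (α + 1) := by
      simp only [hc_def]; rw [← h1]; ring
    rw [h3]
    have := Real.rpow_pos_of_pos ha0 (α - (k:ℝ))
    positivity
  -- derivative of the Taylor sum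
  have hS : ∀ y : ℝ, HasDerivAt
      (fun y : ℝ => ∑ k ∈ Finset.range (n+1), c k * (y - a)^k / (Nat.factorial k : ℝ))
      (∑ k ∈ Finset.range (n+1), c k * ((k:ℝ) * (y - a)^(k-1)) / (Nat.factorial k : ℝ)) y := by
    intro y
    have h := HasDerivAt.fun_sum (fun k (_ : k ∈ Finset.range (n+1)) =>
      (HasDerivAt.const_mul (c k) (((hasDerivAt_id y).sub_const a).pow k)).div_const
        ((Nat.factorial k : ℝ)))
    simpa using h
  have hS' : ∀ y : ℝ, HasDerivAt
      (fun y : ℝ => ∑ k ∈ Finset.range (n+1), c k * ((k:ℝ) * (y - a)^(k-1)) / (Nat.factorial k : ℝ))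
      (∑ k ∈ Finset.range (n+1),
        c k * ((k:ℝ) * (((k-1:ℕ):ℝ) * (y - a)^(k-1-1))) / (Nat.factorial k : ℝ)) y := by
    intro y
    have h := HasDerivAt.fun_sum (fun k (_ : k ∈ Finset.range (n+1)) =>
      (HasDerivAt.const_mul (c k) (HasDerivAt.const_mul ((k:ℝ))
        (((hasDerivAt_id y).sub_const a).pow (k-1)))).div_const ((Nat.factorial k : ℝ)))
    simpa using h
  set G : ℝ → ℝ := fun ρ =>
      1 * (∑ k ∈ Finset.range (n+1), c k * (ρ - a)^k / (Nat.factorial k : ℝ))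
      + ρ * ∑ k ∈ Finset.range (n+1), c k * ((k:ℝ) * (ρ - a)^(k-1)) / (Nat.factorial k : ℝ)
    with hG_def
  have hFeq : (fun ρ : ℝ => deriv
      (fun y : ℝ => y * ∑ k ∈ Finset.range (n + 1),
        iteratedDeriv k (fun x : ℝ => x ^ α / (α + 1)) a * (y - a) ^ k
          / (Nat.factorial k : ℝ)) ρ) = G := by
    funext ρ
    simp only [hiter]
    exact ((hasDerivAt_id ρ).mul (hS ρ)).deriv
  rw [hFeq]
  -- derivative of G
  set D : ℝ → ℝ := fun ρ =>
      1 * (∑ k ∈ Finset.range (n+1), c k * ((k:ℝ) * (ρ - a)^(k-1)) / (Nat.factorial k : ℝ))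
      + (1 * (∑ k ∈ Finset.range (n+1), c k * ((k:ℝ) * (ρ - a)^(k-1)) / (Nat.factorial k : ℝ))
        + ρ * ∑ k ∈ Finset.range (n+1),
            c k * ((k:ℝ) * (((k-1:ℕ):ℝ) * (ρ - a)^(k-1-1))) / (Nat.factorial k : ℝ))
    with hD_def
  have hG : ∀ ρ : ℝ, HasDerivAt G (D ρ) ρ := by
    intro ρ
    exact (HasDerivAt.const_mul 1 (hS ρ)).add ((hasDerivAt_id ρ).mul (hS' ρ))
  apply antitoneOn_of_hasDerivWithinAt_nonpos (convex_Icc (0:ℝ) a)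
    (fun ρ _ => (hG ρ).continuousAt.continuousWithinAt)
    (fun ρ _ => (hG ρ).hasDerivWithinAt.mono interior_subset)
  intro ρ hρ
  rw [interior_Icc] at hρ
  obtain ⟨hρ0, hρa⟩ := hρ
  -- pointwise term sign
  have hterm : ∀ j : ℕ, c (j+1) * (ρ - a)^j ≤ 0 := by
    intro j
    have hx : (ρ - a)^j = (-1:ℝ)^j * (a - ρ)^j := by
      rw [show ρ - a = -(a - ρ) by ring, neg_pow]
    have : c (j+1) * (ρ - a)^j = -(((-1:ℝ)^(j+1) * c (j+1)) * (a - ρ)^j) := by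
      rw [hx]; ring
    rw [this]
    have h1 := hsign (j+1)
    have h2 : (0:ℝ) ≤ (a - ρ)^j := by
      apply pow_nonneg; linarith
    nlinarith
  -- rewrite D as the key identity LHS
  obtain ⟨m, rfl⟩ : ∃ m, n = m + 1 := ⟨n - 1, by omega⟩
  have hDval : D ρ = ∑ k ∈ Finset.range (m+2),
      c k * (k:ℝ) * (2*(ρ-a)^(k-1) + ρ*((k:ℝ)-1)*(ρ-a)^(k-2)) / (Nat.factorial k : ℝ) := by
    simp only [hD_def, one_mul, Finset.mul_sum, ← Finset.sum_add_distrib]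
    apply Finset.sum_congr rfl
    intro k _
    rcases k with _ | j
    · simp
    · have e4 : j+1-1 = j := rfl
      have e5 : j+1-2 = j-1 := rfl
      rw [e4, e5]
      push_cast
      ring
  rw [hDval, key_identity α a ρ ha0.ne' c hrec m]
  -- both parts nonpositive
  have hpart1 : (1+α) * ∑ k ∈ Finset.Ico 1 (m+1),
      c k * (ρ-a)^(k-1) / (Nat.factorial (k-1) : ℝ) ≤ 0 := by
    have hsum : ∑ k ∈ Finset.Ico 1 (m+1),
        c k * (ρ-a)^(k-1) / (Nat.factorial (k-1) : ℝ) ≤ 0 := by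
      apply Finset.sum_nonpos
      intro k hk
      obtain ⟨hk1, _⟩ := Finset.mem_Ico.mp hk
      obtain ⟨j, rfl⟩ : ∃ j, k = j + 1 := ⟨k - 1, by omega⟩
      have hfac : (0:ℝ) < (Nat.factorial (j+1-1) : ℝ) := by
        exact_mod_cast Nat.factorial_pos _
      have := hterm j
      rw [show j+1-1 = j from rfl] at *
      exact div_nonpos_of_nonpos_of_nonneg this hfac.le
    nlinarith
  have hpart2 : ((m:ℝ)+2) * c (m+1) * (ρ-a)^m / (Nat.factorial m : ℝ) ≤ 0 := by
    have hfac : (0:ℝ) < (Nat.factorial m : ℝ) := by exact_mod_cast Nat.factorial_pos m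
    have hnum : ((m:ℝ)+2) * c (m+1) * (ρ-a)^m ≤ 0 := by
      have := hterm m
      nlinarith [Nat.cast_nonneg (α := ℝ) m]
    exact div_nonpos_of_nonpos_of_nonneg hnum hfac.le
  linarith
end

section
/- The local regularization error vanishes on the unregularized region and is bounded on the regularized region: for all ρ ∈ [0, ε²], |F(ρ) − F_n^ε(ρ)| ≤ C_{n,α} ε^{2(α+1)} for a constant C_{n,α} depending only on n and α (independent of ε and ρ), while F(ρ) = F_n^ε(ρ) for ρ ≥ ε². -/
lemma aux_iter_17 (α : ℝ) : ∀ (k : ℕ) (x : ℝ), 0 < x →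
      iteratedDeriv k (fun x : ℝ => x ^ α / (α + 1)) x
        = (∏ i ∈ Finset.range k, (α - i)) * x ^ (α - k) / (α + 1) := by
  intro k
  induction k with
  | zero => intro x hx; simp
  | succ k ih =>
    intro x hx
    rw [iteratedDeriv_succ]
    have hev : iteratedDeriv k (fun x : ℝ => x ^ α / (α + 1))
        =ᶠ[nhds x] fun y => (∏ i ∈ Finset.range k, (α - i)) * y ^ (α - k) / (α + 1) := by
      filter_upwards [isOpen_Ioi.mem_nhds hx] with y hy
      exact ih y hy
    rw [hev.deriv_eq]
    simp only [deriv_div_const, deriv_const_mul_field]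
    rw [Real.deriv_rpow_const x]
    rw [Finset.prod_range_succ]
    push_cast
    rw [sub_add_eq_sub_sub]
    ring

/-- The local regularization error vanishes on {ρ ≥ ε²} and satisfies
|F(ρ) − F_n^ε(ρ)| ≤ C_{n,α} ε^{2(α+1)} on [0, ε²], with C_{n,α} independent of ε and ρ. -/
theorem stmt_17 (α : ℝ) (hα : α ∈ Set.Ioo (-1 : ℝ) 0) (n : ℕ) (hn : 1 ≤ n) :
    ∃ C : ℝ, 0 < C ∧ ∀ ε : ℝ, 0 < ε →
      (∀ ρ ∈ Set.Icc (0 : ℝ) (ε ^ 2),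
        |ρ ^ (α + 1) / (α + 1)
            - ρ * ∑ k ∈ Finset.range (n + 1),
                iteratedDeriv k (fun x : ℝ => x ^ α / (α + 1)) (ε ^ 2) * (ρ - ε ^ 2) ^ k
                  / (Nat.factorial k : ℝ)|
          ≤ C * ε ^ (2 * (α + 1)))
      ∧ ∀ ρ : ℝ, ε ^ 2 ≤ ρ →
          (if ε ^ 2 ≤ ρ then ρ ^ (α + 1) / (α + 1)
           else ρ * ∑ k ∈ Finset.range (n + 1),
             iteratedDeriv k (fun x : ℝ => x ^ α / (α + 1)) (ε ^ 2) * (ρ - ε ^ 2) ^ k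
               / (Nat.factorial k : ℝ))
            = ρ ^ (α + 1) / (α + 1) := by
  obtain ⟨hα1, hα2⟩ := hα
  have hα1' : (0:ℝ) < α + 1 := by linarith
  set S : ℝ := ∑ k ∈ Finset.range (n+1),
      |∏ i ∈ Finset.range k, (α - (i:ℝ))| / (Nat.factorial k : ℝ) with hSdef
  have hS0 : 0 ≤ S := Finset.sum_nonneg fun k _ => by positivity
  refine ⟨(1 + S) / (α + 1), by positivity, fun ε hε => ?_⟩
  have he : (0:ℝ) < ε ^ 2 := by positivity
  constructor
  · rintro ρ ⟨hρ0, hρe⟩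
    have hepow : (ε^2 : ℝ) ^ (α+1) = ε ^ (2*(α+1)) := by
      rw [← Real.rpow_natCast ε 2, ← Real.rpow_mul hε.le]
      norm_num
    have hA : ρ ^ (α+1) ≤ (ε^2) ^ (α+1) := Real.rpow_le_rpow hρ0 hρe (by linarith)
    have hterm : ∀ k ∈ Finset.range (n+1),
        |iteratedDeriv k (fun x : ℝ => x ^ α / (α + 1)) (ε^2) * (ρ - ε^2)^k
            / (Nat.factorial k : ℝ)|
          ≤ (ε^2) ^ α * (|∏ i ∈ Finset.range k, (α - (i:ℝ))| / (Nat.factorial k : ℝ))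
              / (α+1) := by
      intro k _
      rw [aux_iter_17 α k _ he]
      have habs : |ρ - ε^2| ≤ ε^2 := abs_le.mpr ⟨by linarith, by linarith⟩
      have hpk : |ρ - ε^2|^k ≤ (ε^2) ^ ((k:ℝ)) := by
        rw [Real.rpow_natCast]
        exact pow_le_pow_left₀ (abs_nonneg _) habs k
      have hmul : (ε^2:ℝ) ^ (α-(k:ℝ)) * (ε^2) ^ ((k:ℝ)) = (ε^2) ^ α := by
        rw [← Real.rpow_add he]; ring_nf
      have hre : (0:ℝ) ≤ (ε^2:ℝ) ^ (α-(k:ℝ)) := Real.rpow_nonneg he.le _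
      calc |(∏ i ∈ Finset.range k, (α - (i:ℝ))) * (ε^2) ^ (α-(k:ℝ)) / (α+1) * (ρ - ε^2)^k
              / (Nat.factorial k : ℝ)|
          = |∏ i ∈ Finset.range k, (α - (i:ℝ))| * (ε^2) ^ (α-(k:ℝ)) * |ρ - ε^2|^k
              / ((α+1) * (Nat.factorial k : ℝ)) := by
            have h1 : (α+1:ℝ) ≠ 0 := hα1'.ne'
            have h2 : ((Nat.factorial k : ℝ)) ≠ 0 := by positivity
            simp only [abs_div, abs_mul, abs_pow, abs_of_nonneg hre, abs_of_pos hα1',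
              Nat.abs_cast]
            field_simp
        _ ≤ |∏ i ∈ Finset.range k, (α - (i:ℝ))| * (ε^2) ^ (α-(k:ℝ)) * (ε^2) ^ ((k:ℝ))
              / ((α+1) * (Nat.factorial k : ℝ)) := by gcongr
        _ = |∏ i ∈ Finset.range k, (α - (i:ℝ))| * ((ε^2) ^ (α-(k:ℝ)) * (ε^2) ^ ((k:ℝ)))
              / ((α+1) * (Nat.factorial k : ℝ)) := by ring
        _ = |∏ i ∈ Finset.range k, (α - (i:ℝ))| * (ε^2) ^ α
              / ((α+1) * (Nat.factorial k : ℝ)) := by rw [hmul]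
        _ = (ε^2) ^ α * (|∏ i ∈ Finset.range k, (α - (i:ℝ))| / (Nat.factorial k : ℝ))
              / (α+1) := by field_simp
    have hBsum : |∑ k ∈ Finset.range (n+1),
        iteratedDeriv k (fun x : ℝ => x ^ α / (α + 1)) (ε^2) * (ρ - ε^2)^k
          / (Nat.factorial k : ℝ)| ≤ (ε^2) ^ α * S / (α+1) := by
      calc |∑ k ∈ Finset.range (n+1),
          iteratedDeriv k (fun x : ℝ => x ^ α / (α + 1)) (ε^2) * (ρ - ε^2)^k
            / (Nat.factorial k : ℝ)|
          ≤ ∑ k ∈ Finset.range (n+1),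
            |iteratedDeriv k (fun x : ℝ => x ^ α / (α + 1)) (ε^2) * (ρ - ε^2)^k
              / (Nat.factorial k : ℝ)| := Finset.abs_sum_le_sum_abs _ _
        _ ≤ ∑ k ∈ Finset.range (n+1),
            (ε^2) ^ α * (|∏ i ∈ Finset.range k, (α - (i:ℝ))| / (Nat.factorial k : ℝ))
              / (α+1) := Finset.sum_le_sum hterm
        _ = (ε^2) ^ α * S / (α+1) := by
            rw [hSdef, ← Finset.sum_div, ← Finset.mul_sum]
    have hrpA : (0:ℝ) ≤ ρ ^ (α+1) := Real.rpow_nonneg hρ0 _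
    have heps1 : (ε^2:ℝ) ^ (α+1) = (ε^2) ^ α * (ε^2) := Real.rpow_add_one he.ne' α
    calc |ρ ^ (α + 1) / (α + 1)
            - ρ * ∑ k ∈ Finset.range (n + 1),
                iteratedDeriv k (fun x : ℝ => x ^ α / (α + 1)) (ε ^ 2) * (ρ - ε ^ 2) ^ k
                  / (Nat.factorial k : ℝ)|
        ≤ |ρ ^ (α + 1) / (α + 1)|
            + |ρ * ∑ k ∈ Finset.range (n + 1),
                iteratedDeriv k (fun x : ℝ => x ^ α / (α + 1)) (ε ^ 2) * (ρ - ε ^ 2) ^ k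
                  / (Nat.factorial k : ℝ)| := abs_sub _ _
      _ = ρ ^ (α + 1) / (α + 1)
            + ρ * |∑ k ∈ Finset.range (n + 1),
                iteratedDeriv k (fun x : ℝ => x ^ α / (α + 1)) (ε ^ 2) * (ρ - ε ^ 2) ^ k
                  / (Nat.factorial k : ℝ)| := by
            rw [abs_mul, abs_of_nonneg hρ0, abs_of_nonneg (by positivity)]
      _ ≤ (ε^2) ^ (α + 1) / (α + 1) + (ε^2) * ((ε^2) ^ α * S / (α+1)) := by
            gcongr
      _ = (1 + S) / (α + 1) * (ε^2) ^ (α+1) := by rw [heps1]; ring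
      _ = (1 + S) / (α + 1) * ε ^ (2*(α+1)) := by rw [hepow]
  · intro ρ hρ
    rw [if_pos hρ]
end
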